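/- arXiv:2410.03924 — 2 statements merged into one kernel-verified Lean document; each statement's English description precedes it below -/
import Mathlib

section
/- Let e ∈ ℝ^r and θ̃⁻ ∈ ℝ^p, let F be an r×r real symmetric matrix with F e = L θ̃⁻, and define the updated estimation error θ̃ := θ̃⁻ − P Lᵀ R⁻¹ e. Then the Lyapunov difference identity holds: θ̃ᵀ P⁻¹ θ̃ − θ̃⁻ᵀ (P⁻)⁻¹ θ̃⁻ = eᵀ ((F − I) R⁻¹ (F − I) − (L P⁻ Lᵀ + R)⁻¹) e. -/
/-!
By the Woodbury identity the updated covariance is `P = M⁻¹` with `M = (P⁻)⁻¹ + Lᵀ R⁻¹ L`, and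
`S⁻¹ = R⁻¹ - R⁻¹ L M⁻¹ Lᵀ R⁻¹`. The update is `θ̃ = θ̃⁻ - M⁻¹ b` with `b = Lᵀ R⁻¹ e`, so
completing the square gives `θ̃ᵀ M θ̃ = θ̃⁻ᵀ M θ̃⁻ - 2 bᵀ θ̃⁻ + bᵀ M⁻¹ b`. Each of the three
resulting terms becomes a quadratic form in `e` once `L θ̃⁻` is replaced by `F e`.
-/

open Matrix

namespace Matrix

variable {m n α : Type*} [Fintype m] [Fintype n]

theorem dotProduct_transpose_mul_mul_mulVec [CommSemiring α] (A : Matrix m m α)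
    (B : Matrix m n α) (v w : n → α) :
    v ⬝ᵥ ((Bᵀ * A * B) *ᵥ w) = (B *ᵥ v) ⬝ᵥ (A *ᵥ (B *ᵥ w)) := by
  rw [← mulVec_mulVec, ← mulVec_mulVec, dotProduct_transpose_mulVec, dotProduct_comm]

theorem dotProduct_mulVec_sub_inv_mulVec [DecidableEq n] [CommRing α] {M : Matrix n n α}
    (hM : M.IsSymm) (hdet : IsUnit M.det) (x b : n → α) :
    (x - M⁻¹ *ᵥ b) ⬝ᵥ (M *ᵥ (x - M⁻¹ *ᵥ b)) =
      x ⬝ᵥ (M *ᵥ x) - 2 * (x ⬝ᵥ b) + b ⬝ᵥ (M⁻¹ *ᵥ b) := by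
  have hMb : M *ᵥ (M⁻¹ *ᵥ b) = b := by rw [mulVec_mulVec, mul_nonsing_inv M hdet, one_mulVec]
  have hcross : (M⁻¹ *ᵥ b) ⬝ᵥ (M *ᵥ x) = x ⬝ᵥ b := by
    rw [← hM.eq, dotProduct_transpose_mulVec, hM.eq, hMb]
  rw [mulVec_sub, hMb, sub_dotProduct, dotProduct_sub, dotProduct_sub, hcross,
    dotProduct_comm (M⁻¹ *ᵥ b)]
  ring

variable {P : Matrix n n ℝ} {R : Matrix m m ℝ}

theorem PosDef.mul_mul_transpose_add (hP : P.PosDef) (hR : R.PosDef) (L : Matrix m n ℝ) :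
    (L * P * Lᵀ + R).PosDef := by
  simpa using PosDef.posSemidef_add (hP.posSemidef.mul_mul_conjTranspose_same L) hR

variable [DecidableEq m] [DecidableEq n]

theorem PosDef.inv_add_transpose_mul_inv_mul (hP : P.PosDef) (hR : R.PosDef)
    (L : Matrix m n ℝ) : (P⁻¹ + Lᵀ * R⁻¹ * L).PosDef := by
  simpa using hP.inv.add_posSemidef (hR.inv.posSemidef.conjTranspose_mul_mul_same L)

theorem inv_add_transpose_mul_inv_mul_eq_sub (hP : P.PosDef) (hR : R.PosDef)
    (L : Matrix m n ℝ) :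
    (P⁻¹ + Lᵀ * R⁻¹ * L)⁻¹ = P - P * Lᵀ * (L * P * Lᵀ + R)⁻¹ * L * P := by
  have hPinv : P⁻¹⁻¹ = P := nonsing_inv_nonsing_inv _ hP.det_pos.ne'.isUnit
  have hRinv : R⁻¹⁻¹ = R := nonsing_inv_nonsing_inv _ hR.det_pos.ne'.isUnit
  have hS : R + L * P * Lᵀ = L * P * Lᵀ + R := add_comm _ _
  have := add_mul_mul_inv_eq_sub P⁻¹ Lᵀ R⁻¹ L hP.inv.isUnit hR.inv.isUnit
    (by rw [hPinv, hRinv, hS]; exact (hP.mul_mul_transpose_add hR L).isUnit)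
  rwa [hPinv, hRinv, hS] at this

theorem inv_mul_mul_transpose_add_eq_sub (hP : P.PosDef) (hR : R.PosDef) (L : Matrix m n ℝ) :
    (L * P * Lᵀ + R)⁻¹ = R⁻¹ - R⁻¹ * L * (P⁻¹ + Lᵀ * R⁻¹ * L)⁻¹ * Lᵀ * R⁻¹ := by
  rw [add_comm]
  exact add_mul_mul_inv_eq_sub R L P Lᵀ hR.isUnit hP.isUnit
    (hP.inv_add_transpose_mul_inv_mul hR L).isUnit

end Matrix

theorem ekf_lyapunov_difference_identity_general
    (p r : ℕ)
    (Pminus : Matrix (Fin p) (Fin p) ℝ) (hPminus : Pminus.PosDef)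
    (R : Matrix (Fin r) (Fin r) ℝ) (hR : R.PosDef)
    (L : Matrix (Fin r) (Fin p) ℝ)
    (S : Matrix (Fin r) (Fin r) ℝ) (hS : S = L * Pminus * Lᵀ + R)
    (K : Matrix (Fin p) (Fin r) ℝ) (hK : K = Pminus * Lᵀ * S⁻¹)
    (P : Matrix (Fin p) (Fin p) ℝ) (hP : P = (1 - K * L) * Pminus)
    (e : Fin r → ℝ) (θminus : Fin p → ℝ)
    (F : Matrix (Fin r) (Fin r) ℝ) (hF : F.IsSymm)
    (hFe : F *ᵥ e = L *ᵥ θminus)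
    (θ : Fin p → ℝ) (hθ : θ = θminus - (P * Lᵀ * R⁻¹) *ᵥ e) :
    θ ⬝ᵥ (P⁻¹ *ᵥ θ) - θminus ⬝ᵥ (Pminus⁻¹ *ᵥ θminus) =
      e ⬝ᵥ (((F - 1) * R⁻¹ * (F - 1) - (L * Pminus * Lᵀ + R)⁻¹) *ᵥ e) := by
  set M := Pminus⁻¹ + Lᵀ * R⁻¹ * L
  have hMpos : M.PosDef := hPminus.inv_add_transpose_mul_inv_mul hR L
  have hMdet : IsUnit M.det := hMpos.det_pos.ne'.isUnit
  have hRinv : R⁻¹.IsSymm := (isHermitian_iff_isSymm.mp hR.isHermitian).inv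
  have hPM : P = M⁻¹ := by
    rw [hP, hK, hS, inv_add_transpose_mul_inv_mul_eq_sub hPminus hR L, sub_mul, one_mul]
  have hquad : θminus ⬝ᵥ (M *ᵥ θminus) - θminus ⬝ᵥ (Pminus⁻¹ *ᵥ θminus) =
      e ⬝ᵥ ((F * R⁻¹ * F) *ᵥ e) := by
    rw [add_mulVec, dotProduct_add, add_sub_cancel_left, dotProduct_transpose_mul_mul_mulVec,
      ← hFe, ← dotProduct_transpose_mul_mul_mulVec, hF.eq]
  have hlin : θminus ⬝ᵥ ((Lᵀ * R⁻¹) *ᵥ e) = e ⬝ᵥ ((R⁻¹ * F) *ᵥ e) := by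
    rw [← mulVec_mulVec, dotProduct_transpose_mulVec, ← hFe, dotProduct_comm, ← hRinv.eq,
      dotProduct_transpose_mulVec, hRinv.eq, mulVec_mulVec]
  have hgain : ((Lᵀ * R⁻¹) *ᵥ e) ⬝ᵥ (M⁻¹ *ᵥ ((Lᵀ * R⁻¹) *ᵥ e)) =
      e ⬝ᵥ ((R⁻¹ - (L * Pminus * Lᵀ + R)⁻¹) *ᵥ e) := by
    rw [← dotProduct_transpose_mul_mul_mulVec, inv_mul_mul_transpose_add_eq_sub hPminus hR L,
      sub_sub_cancel, transpose_mul, transpose_transpose, hRinv.eq]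
    simp only [Matrix.mul_assoc, M]
  have hcomm : e ⬝ᵥ ((F * R⁻¹) *ᵥ e) = e ⬝ᵥ ((R⁻¹ * F) *ᵥ e) := by
    rw [← dotProduct_transpose_mulVec, transpose_mul, hF.eq, hRinv.eq]
  rw [hθ, hPM, nonsing_inv_nonsing_inv M hMdet, Matrix.mul_assoc, ← mulVec_mulVec,
    dotProduct_mulVec_sub_inv_mulVec (isHermitian_iff_isSymm.mp hMpos.isHermitian) hMdet,
    show (F - 1) * R⁻¹ * (F - 1) - (L * Pminus * Lᵀ + R)⁻¹ =
      F * R⁻¹ * F - F * R⁻¹ - R⁻¹ * F + (R⁻¹ - (L * Pminus * Lᵀ + R)⁻¹) by noncomm_ring]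
  simp only [add_mulVec, sub_mulVec, dotProduct_add, dotProduct_sub] at hgain ⊢
  linarith

/-- Lyapunov difference identity for the EKF update:
`θ̃ᵀ P⁻¹ θ̃ − θ̃⁻ᵀ (P⁻)⁻¹ θ̃⁻ = eᵀ ((F − I) R⁻¹ (F − I) − (L P⁻ Lᵀ + R)⁻¹) e`. -/
theorem ekf_lyapunov_difference_identity
    (p r : ℕ) (hp : 0 < p) (hr : 0 < r)
    (Pminus : Matrix (Fin p) (Fin p) ℝ) (hPminus : Pminus.PosDef)
    (R : Matrix (Fin r) (Fin r) ℝ) (hR : R.PosDef)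
    (L : Matrix (Fin r) (Fin p) ℝ)
    (S : Matrix (Fin r) (Fin r) ℝ) (hS : S = L * Pminus * Lᵀ + R)
    (K : Matrix (Fin p) (Fin r) ℝ) (hK : K = Pminus * Lᵀ * S⁻¹)
    (P : Matrix (Fin p) (Fin p) ℝ) (hP : P = (1 - K * L) * Pminus)
    (e : Fin r → ℝ) (θminus : Fin p → ℝ)
    (F : Matrix (Fin r) (Fin r) ℝ) (hF : F.IsSymm)
    (hFe : F *ᵥ e = L *ᵥ θminus)
    (θ : Fin p → ℝ) (hθ : θ = θminus - (P * Lᵀ * R⁻¹) *ᵥ e) :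
    θ ⬝ᵥ (P⁻¹ *ᵥ θ) - θminus ⬝ᵥ (Pminus⁻¹ *ᵥ θminus) =
      e ⬝ᵥ (((F - 1) * R⁻¹ * (F - 1) - (L * Pminus * Lᵀ + R)⁻¹) *ᵥ e) :=
  ekf_lyapunov_difference_identity_general p r Pminus hPminus R hR L S hS K hK P hP e θminus F hF
    hFe θ hθ
end

section
/- Let θ̃_prev ∈ ℝ^p, let G be a p×p real matrix, set θ̃⁻ := G θ̃_prev, let e ∈ ℝ^r, let F be an r×r real symmetric matrix with F e = L θ̃⁻, and define θ̃ := θ̃⁻ − P Lᵀ R⁻¹ e. If (F − I) R⁻¹ (F − I) ≼ (L P⁻ Lᵀ + R)⁻¹ and Gᵀ (P⁻)⁻¹ G ≼ (P⁻)⁻¹ in the Loewner order, then the Lyapunov value does not increase: θ̃ᵀ P⁻¹ θ̃ ≤ θ̃_prevᵀ (P⁻)⁻¹ θ̃_prev. -/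
/-!
Woodbury's identity puts the update in information form, `P⁻¹ = (P⁻)⁻¹ + Lᵀ R⁻¹ L`, and
`S⁻¹ = R⁻¹ - R⁻¹ L P Lᵀ R⁻¹`. Completing the square in `θ̃ = θ̃⁻ - P Lᵀ R⁻¹ e` then gives
`θ̃ᵀ P⁻¹ θ̃ = θ̃⁻ᵀ (P⁻)⁻¹ θ̃⁻ + (L θ̃⁻ - e)ᵀ R⁻¹ (L θ̃⁻ - e) - eᵀ S⁻¹ e`,
where `L θ̃⁻ - e = (F - I) e`. The first Loewner condition makes the sum of the last two terms
nonpositive, and the second bounds `θ̃⁻ᵀ (P⁻)⁻¹ θ̃⁻ = θ̃_prevᵀ Gᵀ (P⁻)⁻¹ G θ̃_prev` by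
`θ̃_prevᵀ (P⁻)⁻¹ θ̃_prev`.
-/

open Matrix

namespace Matrix

variable {m n 𝕜 : Type*} [Fintype m] [Fintype n] [CommRing 𝕜]

theorem IsSymm.dotProduct_mulVec_comm {J : Matrix n n 𝕜} (hJ : J.IsSymm) (x y : n → 𝕜) :
    x ⬝ᵥ (J *ᵥ y) = y ⬝ᵥ (J *ᵥ x) := by
  rw [← dotProduct_transpose_mulVec, hJ.eq]

theorem IsSymm.sub_dotProduct_mulVec_sub {J : Matrix n n 𝕜} (hJ : J.IsSymm) (x y : n → 𝕜) :
    (x - y) ⬝ᵥ (J *ᵥ (x - y)) = x ⬝ᵥ (J *ᵥ x) - 2 * (x ⬝ᵥ (J *ᵥ y)) + y ⬝ᵥ (J *ᵥ y) := by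
  rw [mulVec_sub, dotProduct_sub, sub_dotProduct, sub_dotProduct, hJ.dotProduct_mulVec_comm y x]
  ring

theorem dotProduct_transpose_mul_mul_mulVec_s6 (M : Matrix m n 𝕜) (B : Matrix m m 𝕜) (x y : n → 𝕜) :
    x ⬝ᵥ ((Mᵀ * B * M) *ᵥ y) = (M *ᵥ x) ⬝ᵥ (B *ᵥ (M *ᵥ y)) := by
  rw [← mulVec_mulVec, ← mulVec_mulVec, dotProduct_transpose_mulVec, dotProduct_comm]

theorem PosSemidef.dotProduct_mulVec_le_of_sub_transpose_mul_mul [PartialOrder 𝕜]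
    [IsOrderedRing 𝕜] [StarRing 𝕜] [TrivialStar 𝕜] {A : Matrix m m 𝕜} {B : Matrix n n 𝕜}
    {M : Matrix m n 𝕜} (h : (B - Mᵀ * A * M).PosSemidef) (x : n → 𝕜) :
    (M *ᵥ x) ⬝ᵥ (A *ᵥ (M *ᵥ x)) ≤ x ⬝ᵥ (B *ᵥ x) := by
  have := h.dotProduct_mulVec_nonneg x
  rwa [star_trivial, sub_mulVec, dotProduct_sub, dotProduct_transpose_mul_mul_mulVec_s6,
    sub_nonneg] at this

variable [DecidableEq n]

theorem dotProduct_mulVec_information_update {A : Matrix n n 𝕜} {W : Matrix m m 𝕜}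
    (L : Matrix m n 𝕜) (hA : A.IsSymm) (hW : W.IsSymm) (hJ : IsUnit (A + Lᵀ * W * L))
    (x : n → 𝕜) (e : m → 𝕜) :
    (x - ((A + Lᵀ * W * L)⁻¹ * Lᵀ * W) *ᵥ e) ⬝ᵥ
        ((A + Lᵀ * W * L) *ᵥ (x - ((A + Lᵀ * W * L)⁻¹ * Lᵀ * W) *ᵥ e)) =
      x ⬝ᵥ (A *ᵥ x) + (L *ᵥ x - e) ⬝ᵥ (W *ᵥ (L *ᵥ x - e)) -
        e ⬝ᵥ ((W - W * L * (A + Lᵀ * W * L)⁻¹ * Lᵀ * W) *ᵥ e) := by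
  set J := A + Lᵀ * W * L with hJdef
  have hJsymm : J.IsSymm := hA.add (by simp [IsSymm, transpose_mul, hW.eq, Matrix.mul_assoc])
  have hJv : J *ᵥ ((J⁻¹ * Lᵀ * W) *ᵥ e) = Lᵀ *ᵥ (W *ᵥ e) := by
    rw [mulVec_mulVec, ← Matrix.mul_assoc, ← Matrix.mul_assoc,
      mul_nonsing_inv _ ((isUnit_iff_isUnit_det _).mp hJ), Matrix.one_mul, mulVec_mulVec]
  have hcross : x ⬝ᵥ (Lᵀ *ᵥ (W *ᵥ e)) = (L *ᵥ x) ⬝ᵥ (W *ᵥ e) := by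
    rw [dotProduct_transpose_mulVec, dotProduct_comm]
  have hgain : ((J⁻¹ * Lᵀ * W) *ᵥ e) ⬝ᵥ (Lᵀ *ᵥ (W *ᵥ e)) =
      e ⬝ᵥ ((W * L * J⁻¹ * Lᵀ * W) *ᵥ e) := by
    have hJinv : (J⁻¹)ᵀ = J⁻¹ := by rw [transpose_nonsing_inv, hJsymm.eq]
    rw [dotProduct_comm, ← dotProduct_transpose_mulVec, mulVec_mulVec, mulVec_mulVec]
    simp only [transpose_mul, transpose_transpose, hW.eq, hJinv, Matrix.mul_assoc]
  rw [hJsymm.sub_dotProduct_mulVec_sub, hJv, hW.sub_dotProduct_mulVec_sub, hJdef, add_mulVec,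
    dotProduct_add, dotProduct_transpose_mul_mul_mulVec_s6, ← hJdef, hcross, hgain, sub_mulVec,
    dotProduct_sub]
  ring

variable [DecidableEq m]

theorem one_sub_kalman_gain_mul_mul_eq_inv {P₀ : Matrix n n 𝕜} {R : Matrix m m 𝕜}
    (L : Matrix m n 𝕜) (hP₀ : IsUnit P₀) (hR : IsUnit R) (hS : IsUnit (L * P₀ * Lᵀ + R)) :
    (1 - P₀ * Lᵀ * (L * P₀ * Lᵀ + R)⁻¹ * L) * P₀ = (P₀⁻¹ + Lᵀ * R⁻¹ * L)⁻¹ := by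
  have hP₀₀ := nonsing_inv_nonsing_inv _ ((isUnit_iff_isUnit_det _).mp hP₀)
  have hRR := nonsing_inv_nonsing_inv _ ((isUnit_iff_isUnit_det _).mp hR)
  rw [add_mul_mul_inv_eq_sub _ _ _ _ (isUnit_nonsing_inv_iff.mpr hP₀)
    (isUnit_nonsing_inv_iff.mpr hR), hP₀₀, hRR, add_comm R]
  · noncomm_ring
  · rwa [hP₀₀, hRR, add_comm]

theorem mul_mul_transpose_add_inv_eq_sub {P₀ : Matrix n n 𝕜} {R : Matrix m m 𝕜}
    (L : Matrix m n 𝕜) (hP₀ : IsUnit P₀) (hR : IsUnit R) (hJ : IsUnit (P₀⁻¹ + Lᵀ * R⁻¹ * L)) :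
    (L * P₀ * Lᵀ + R)⁻¹ = R⁻¹ - R⁻¹ * L * (P₀⁻¹ + Lᵀ * R⁻¹ * L)⁻¹ * Lᵀ * R⁻¹ := by
  rw [add_comm, add_mul_mul_inv_eq_sub _ _ _ _ hR hP₀ hJ]

end Matrix

theorem ekf_one_step_lyapunov_decrease_general
    (p r : ℕ)
    (Pminus : Matrix (Fin p) (Fin p) ℝ) (hPminus : Pminus.PosDef)
    (R : Matrix (Fin r) (Fin r) ℝ) (hR : R.PosDef)
    (L : Matrix (Fin r) (Fin p) ℝ)
    (S : Matrix (Fin r) (Fin r) ℝ) (hS : S = L * Pminus * Lᵀ + R)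
    (K : Matrix (Fin p) (Fin r) ℝ) (hK : K = Pminus * Lᵀ * S⁻¹)
    (P : Matrix (Fin p) (Fin p) ℝ) (hP : P = (1 - K * L) * Pminus)
    (θprev : Fin p → ℝ) (G : Matrix (Fin p) (Fin p) ℝ)
    (θminus : Fin p → ℝ) (hθminus : θminus = G *ᵥ θprev)
    (e : Fin r → ℝ)
    (F : Matrix (Fin r) (Fin r) ℝ) (hF : F.IsSymm)
    (hFe : F *ᵥ e = L *ᵥ θminus)
    (θ : Fin p → ℝ) (hθ : θ = θminus - (P * Lᵀ * R⁻¹) *ᵥ e)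
    (hLoew1 : ((L * Pminus * Lᵀ + R)⁻¹ - (F - 1) * R⁻¹ * (F - 1)).PosSemidef)
    (hLoew2 : (Pminus⁻¹ - Gᵀ * Pminus⁻¹ * G).PosSemidef) :
    θ ⬝ᵥ (P⁻¹ *ᵥ θ) ≤ θprev ⬝ᵥ (Pminus⁻¹ *ᵥ θprev) := by
  have hSpd : (L * Pminus * Lᵀ + R).PosDef := by
    simpa [add_comm] using hR.add_posSemidef (hPminus.posSemidef.mul_mul_conjTranspose_same L)
  have hJpd : (Pminus⁻¹ + Lᵀ * R⁻¹ * L).PosDef := by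
    simpa using hPminus.inv.add_posSemidef (hR.inv.posSemidef.conjTranspose_mul_mul_same L)
  have hPJ : P = (Pminus⁻¹ + Lᵀ * R⁻¹ * L)⁻¹ := by
    rw [hP, hK, hS, one_sub_kalman_gain_mul_mul_eq_inv L hPminus.isUnit hR.isUnit hSpd.isUnit]
  have hV := dotProduct_mulVec_information_update L
    (isHermitian_iff_isSymm.mp hPminus.inv.isHermitian)
    (isHermitian_iff_isSymm.mp hR.inv.isHermitian) hJpd.isUnit θminus e
  have hresidual : F *ᵥ e - e = (F - 1) *ᵥ e := by rw [sub_mulVec, one_mulVec]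
  rw [← mul_mul_transpose_add_inv_eq_sub L hPminus.isUnit hR.isUnit hJpd.isUnit, ← hPJ, ← hθ,
    ← hFe, hresidual] at hV
  nth_rw 1 [← (hF.sub isSymm_one).eq] at hLoew1
  have hinnov := hLoew1.dotProduct_mulVec_le_of_sub_transpose_mul_mul e
  have hprior := hLoew2.dotProduct_mulVec_le_of_sub_transpose_mul_mul θprev
  rw [← hθminus] at hprior
  rw [hPJ, nonsing_inv_nonsing_inv _ ((isUnit_iff_isUnit_det _).mp hJpd.isUnit), hV]
  linarith

/-- One-step Lyapunov decrease for the EKF parameter estimator: under the Loewner conditions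
`(F − I) R⁻¹ (F − I) ≼ (L P⁻ Lᵀ + R)⁻¹` and `Gᵀ (P⁻)⁻¹ G ≼ (P⁻)⁻¹`, the Lyapunov value
does not increase: `θ̃ᵀ P⁻¹ θ̃ ≤ θ̃_prevᵀ (P⁻)⁻¹ θ̃_prev`. -/
theorem ekf_one_step_lyapunov_decrease
    (p r : ℕ) (hp : 0 < p) (hr : 0 < r)
    (Pminus : Matrix (Fin p) (Fin p) ℝ) (hPminus : Pminus.PosDef)
    (R : Matrix (Fin r) (Fin r) ℝ) (hR : R.PosDef)
    (L : Matrix (Fin r) (Fin p) ℝ)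
    (S : Matrix (Fin r) (Fin r) ℝ) (hS : S = L * Pminus * Lᵀ + R)
    (K : Matrix (Fin p) (Fin r) ℝ) (hK : K = Pminus * Lᵀ * S⁻¹)
    (P : Matrix (Fin p) (Fin p) ℝ) (hP : P = (1 - K * L) * Pminus)
    (θprev : Fin p → ℝ) (G : Matrix (Fin p) (Fin p) ℝ)
    (θminus : Fin p → ℝ) (hθminus : θminus = G *ᵥ θprev)
    (e : Fin r → ℝ)
    (F : Matrix (Fin r) (Fin r) ℝ) (hF : F.IsSymm)
    (hFe : F *ᵥ e = L *ᵥ θminus)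
    (θ : Fin p → ℝ) (hθ : θ = θminus - (P * Lᵀ * R⁻¹) *ᵥ e)
    (hLoew1 : ((L * Pminus * Lᵀ + R)⁻¹ - (F - 1) * R⁻¹ * (F - 1)).PosSemidef)
    (hLoew2 : (Pminus⁻¹ - Gᵀ * Pminus⁻¹ * G).PosSemidef) :
    θ ⬝ᵥ (P⁻¹ *ᵥ θ) ≤ θprev ⬝ᵥ (Pminus⁻¹ *ᵥ θprev) :=
  ekf_one_step_lyapunov_decrease_general p r Pminus hPminus R hR L S hS K hK P hP θprev G θminus
    hθminus e F hF hFe θ hθ hLoew1 hLoew2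
end
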